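/- arXiv:2306.12154 — 2 statements merged into one kernel-verified Lean document; each statement's English description precedes it below -/
import Mathlib

section
/- Let r > 0, z > 0, 0 < x_R < z, and s = √(2r). If w : ℝ → ℝ is twice continuously differentiable on [0, z] and satisfies (1/2)·w''(y) − r·w(y) + r·w(x_R) = 0 for all y ∈ [0, z], w(0) = 1 and w(z) = 0, then w(y) = c₁·e^{−y·s} + c₂·e^{y·s} + a for all y ∈ [0, z], where c₁ = 1/((e^{z·s} − 1)·(e^{−z·s} + e^{−2x_R·s})), c₂ = −e^{−2x_R·s}·c₁, and a = 1 − c₁ − c₂. -/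
/-!
Subtracting the constant `w x_R` turns the nonlocal equation into `u'' = s² u`. On an interval the
solutions of this are `A e^{-sy} + B e^{sy}`, because `u' + s u` and `u' - s u` solve `p' = s p` and
`q' = -s q` and are therefore exponentials. The conditions `w 0 = 1`, `w z = 0` and
`u x_R = 0` then determine `A`, `B` and `w x_R`.
-/

open Real Set

theorem ContDiffOn.hasDerivWithinAt_derivWithin_iteratedDerivWithin_two {𝕜 F : Type*}
    [NontriviallyNormedField 𝕜] [NormedAddCommGroup F] [NormedSpace 𝕜 F]
    {f : 𝕜 → F} {s : Set 𝕜} {x : 𝕜}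
    (hf : ContDiffOn 𝕜 2 f s) (hs : UniqueDiffOn 𝕜 s) (hx : x ∈ s) :
    HasDerivWithinAt (derivWithin f s) (iteratedDerivWithin 2 f s x) s x := by
  rw [iteratedDerivWithin_succ', iteratedDerivWithin_one]
  exact ((hf.derivWithin hs (by norm_num)).differentiableOn one_ne_zero x hx).hasDerivWithinAt

theorem eq_mul_exp_of_hasDerivWithinAt_mul {f : ℝ → ℝ} {a b c : ℝ}
    (hf : ∀ x ∈ Icc a b, HasDerivWithinAt f (c * f x) (Icc a b) x) :
    ∀ x ∈ Icc a b, f x = f a * exp (c * (x - a)) := by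
  set g : ℝ → ℝ := fun x => f x * exp (-(c * (x - a)))
  have hg : ∀ x ∈ Icc a b, HasDerivWithinAt g 0 (Icc a b) x := fun x hx => by
    have he : HasDerivWithinAt (fun x => exp (-(c * (x - a)))) (exp (-(c * (x - a))) * -(c * 1))
        (Icc a b) x :=
      (((hasDerivWithinAt_id x _).sub_const a).const_mul c).neg.exp
    exact ((hf x hx).mul he).congr_deriv (by ring)
  intro x hx
  have hconst : g x = g a := by
    simpa [sub_eq_zero] using norm_image_sub_le_of_norm_deriv_le_segment' hg (C := 0)
      (fun _ _ => norm_zero.le) x hx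
  simp only [g, sub_self, mul_zero, exp_zero, exp_neg] at hconst
  field_simp at hconst
  linear_combination hconst

theorem exists_exp_repr_of_hasDerivWithinAt_sq {u u' : ℝ → ℝ} {a b s : ℝ} (hs : s ≠ 0)
    (hu : ∀ x ∈ Icc a b, HasDerivWithinAt u (u' x) (Icc a b) x)
    (hu' : ∀ x ∈ Icc a b, HasDerivWithinAt u' (s ^ 2 * u x) (Icc a b) x) :
    ∃ A B : ℝ, ∀ x ∈ Icc a b, u x = A * exp (-x * s) + B * exp (x * s) := by
  have hp := eq_mul_exp_of_hasDerivWithinAt_mul (f := fun x => u' x + s * u x) (c := s)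
    fun x hx => ((hu' x hx).add ((hu x hx).const_mul s)).congr_deriv (by ring)
  have hq := eq_mul_exp_of_hasDerivWithinAt_mul (f := fun x => u' x - s * u x) (c := -s)
    fun x hx => ((hu' x hx).sub ((hu x hx).const_mul s)).congr_deriv (by ring)
  refine ⟨-(u' a - s * u a) * exp (s * a) / (2 * s), (u' a + s * u a) * exp (-(s * a)) / (2 * s),
    fun x hx => ?_⟩
  have hpx := hp x hx
  have hqx := hq x hx
  rw [show s * (x - a) = x * s + -(s * a) by ring, exp_add] at hpx
  rw [show -s * (x - a) = -x * s + s * a by ring, exp_add] at hqx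
  rw [div_mul_eq_mul_div, div_mul_eq_mul_div, ← add_div, eq_div_iff (by positivity)]
  linear_combination hpx - hqx

theorem exp_coeffs_eq_of_boundary_conditions {s xR z A B : ℝ}
    (hxR : A * exp (-xR * s) + B * exp (xR * s) = 0)
    (hz : A * exp (-z * s) + B * exp (z * s) + (1 - A - B) = 0) :
    B = -exp (-2 * xR * s) * A ∧
      A = 1 / ((exp (z * s) - 1) * (exp (-z * s) + exp (-2 * xR * s))) := by
  have hX : exp (-xR * s) * exp (xR * s) = 1 := by rw [← exp_add]; simp
  have hZ : exp (z * s) * exp (-z * s) = 1 := by rw [← exp_add]; simp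
  have hE : exp (-2 * xR * s) = exp (-xR * s) ^ 2 := by rw [sq, ← exp_add]; ring_nf
  have hB : B = -exp (-2 * xR * s) * A := by
    rw [hE]; linear_combination exp (-xR * s) * hxR - B * hX
  refine ⟨hB, eq_one_div_of_mul_eq_one_left ?_⟩
  rw [hB] at hz
  linear_combination -hz + A * hZ

theorem stmt_13 (r xR z s : ℝ) (hr : 0 < r) (hz : 0 < z)
    (hxR : 0 < xR) (hxRz : xR < z)
    (hs : s = Real.sqrt (2*r))
    (w : ℝ → ℝ)
    (hreg : ContDiffOn ℝ 2 w (Set.Icc 0 z))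
    (hode : ∀ y ∈ Set.Icc (0:ℝ) z,
      (1/2) * iteratedDerivWithin 2 w (Set.Icc 0 z) y - r * w y + r * w xR = 0)
    (h0 : w 0 = 1) (hz0 : w z = 0) :
    ∀ y ∈ Set.Icc (0:ℝ) z,
      w y = (1 / ((Real.exp (z*s) - 1) * (Real.exp (-z*s) + Real.exp (-2*xR*s))))
              * Real.exp (-y*s)
          + (-Real.exp (-2*xR*s)
              * (1 / ((Real.exp (z*s) - 1) * (Real.exp (-z*s) + Real.exp (-2*xR*s)))))
              * Real.exp (y*s)
          + (1 - (1 / ((Real.exp (z*s) - 1) * (Real.exp (-z*s) + Real.exp (-2*xR*s))))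
              - (-Real.exp (-2*xR*s)
                * (1 / ((Real.exp (z*s) - 1) * (Real.exp (-z*s) + Real.exp (-2*xR*s)))))) := by
  have hs2 : s ^ 2 = 2 * r := by rw [hs]; exact sq_sqrt (by positivity)
  have hs0 : s ≠ 0 := by rw [hs]; positivity
  have hud : UniqueDiffOn ℝ (Icc 0 z) := uniqueDiffOn_Icc hz
  obtain ⟨A, B, hAB⟩ := exists_exp_repr_of_hasDerivWithinAt_sq (u := fun y => w y - w xR) hs0
    (fun y hy => ((hreg.differentiableOn two_ne_zero y hy).hasDerivWithinAt).sub_const _)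
    (fun y hy => (hreg.hasDerivWithinAt_derivWithin_iteratedDerivWithin_two hud hy).congr_deriv
      (by linear_combination 2 * hode y hy - (w y - w xR) * hs2))
  have hA0 := hAB 0 (left_mem_Icc.2 hz.le)
  have hAxR := hAB xR ⟨hxR.le, hxRz.le⟩
  have hAz := hAB z (right_mem_Icc.2 hz.le)
  simp only [h0, hz0, sub_self, neg_zero, zero_mul, exp_zero, mul_one] at hA0 hAxR hAz
  obtain ⟨hB, hA⟩ :=
    exp_coeffs_eq_of_boundary_conditions hAxR.symm (by linear_combination -hAz + hA0)
  intro y hy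
  rw [← hA, ← hB]
  linear_combination hAB y hy - hA0
end

section
/- Let r > 0, x_R > 0, μ ∈ ℝ, and set s = μ + √(μ² + 2r). If T : ℝ → ℝ is twice continuously differentiable on [0, ∞), bounded on [0, ∞), satisfies T(0) = 0 and (1/2)·T''(x) + μ·T'(x) − r·T(x) = −1 − r·T(x_R) for all x ≥ 0, then T(x) = (1/r)·exp(x_R·s)·(1 − exp(−x·s)) for all x ≥ 0; in particular T(x) → (1/r)·exp(x_R·s) as x → +∞. -/
/-!
Put `A = T x_R + 1 / r`. Then `u = T - A` solves `u'' + 2 μ u' - 2 r u = 0`, whose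
characteristic roots are `a = -μ + √(μ² + 2r) > 0` and `-s < 0`, so `u = c e^{-s x} + D e^{a x}`.
Boundedness of `T` forces `D = 0` and `T 0 = 0` gives `c = -A`, so `T x = A (1 - e^{-s x})`;
evaluating this at `x_R` gives `r A e^{-s x_R} = 1`.
-/

open Real Set Filter

lemma eq_of_hasDerivWithinAt_zero_Ici {f : ℝ → ℝ}
    (hf : ∀ x ∈ Ici (0:ℝ), HasDerivWithinAt f 0 (Ici 0) x) :
    ∀ x ∈ Ici (0:ℝ), f x = f 0 := by
  intro x hx
  refine (convex_Ici 0).is_const_of_fderivWithin_eq_zero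
    (fun y hy => (hf y hy).differentiableWithinAt) (fun y hy => ?_) hx self_mem_Ici
  rw [(hf y hy).hasFDerivWithinAt.fderivWithin (uniqueDiffOn_Ici 0 y hy)]
  ext; simp

lemma eq_mul_exp_of_hasDerivWithinAt_Ici {g : ℝ → ℝ} {a : ℝ}
    (hg : ∀ x ∈ Ici (0:ℝ), HasDerivWithinAt g (a * g x) (Ici 0) x) :
    ∀ x ∈ Ici (0:ℝ), g x = g 0 * exp (a * x) := by
  have hconst := eq_of_hasDerivWithinAt_zero_Ici (f := fun x => exp (-(a * x)) * g x)
    fun x hx => by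
      have hexp : HasDerivWithinAt (fun x => exp (-(a * x))) (exp (-(a * x)) * -a) (Ici 0) x :=
        (((hasDerivAt_id x).const_mul a).neg.hasDerivWithinAt.exp).congr_deriv (by simp)
      exact (hexp.mul (hg x hx)).congr_deriv (by ring)
  intro x hx
  have h := hconst x hx
  simp only [mul_zero, neg_zero, exp_zero, one_mul] at h
  rw [← h, mul_right_comm, ← exp_add, neg_add_cancel, exp_zero, one_mul]

lemma exists_eq_exp_add_exp_of_hasDerivWithinAt_Ici {u u' u'' : ℝ → ℝ} {a b : ℝ}
    (hab : a ≠ b)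
    (hu : ∀ x ∈ Ici (0:ℝ), HasDerivWithinAt u (u' x) (Ici 0) x)
    (hu' : ∀ x ∈ Ici (0:ℝ), HasDerivWithinAt u' (u'' x) (Ici 0) x)
    (hode : ∀ x ∈ Ici (0:ℝ), u'' x = (a + b) * u' x - a * b * u x) :
    ∃ D, ∀ x ∈ Ici (0:ℝ), u x = (u 0 - D) * exp (b * x) + D * exp (a * x) := by
  -- Factor the operator as `(∂ - a) (∂ - b)` and solve two first-order equations.
  set C := u' 0 - b * u 0
  have hfirst : ∀ x ∈ Ici (0:ℝ), u' x - b * u x = C * exp (a * x) :=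
    eq_mul_exp_of_hasDerivWithinAt_Ici (g := fun x => u' x - b * u x) fun x hx =>
      ((hu' x hx).sub ((hu x hx).const_mul b)).congr_deriv (by rw [hode x hx]; ring)
  set D := C / (a - b)
  have hsub : a - b ≠ 0 := sub_ne_zero.mpr hab
  have hsecond : ∀ x ∈ Ici (0:ℝ), u x - D * exp (a * x) = (u 0 - D) * exp (b * x) := by
    have h := eq_mul_exp_of_hasDerivWithinAt_Ici (g := fun x => u x - D * exp (a * x)) (a := b)
      fun x hx => by
        have hexp : HasDerivWithinAt (fun x => exp (a * x)) (exp (a * x) * a) (Ici 0) x :=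
          ((hasDerivAt_id x).const_mul a).hasDerivWithinAt.exp.congr_deriv (by simp)
        refine ((hu x hx).sub (hexp.const_mul D)).congr_deriv ?_
        have h := hfirst x hx
        simp only [D]
        field_simp
        linear_combination (a - b) * h
    simpa using h
  exact ⟨D, fun x hx => by linear_combination hsecond x hx⟩

lemma eq_zero_of_bounded_mul_exp_add_mul_exp {a b c D M : ℝ} (ha : 0 < a) (hb : b ≤ 0)
    (hM : ∀ x ∈ Ici (0:ℝ), |c * exp (b * x) + D * exp (a * x)| ≤ M) : D = 0 := by
  by_contra hD
  have hgrow : Tendsto (fun x => |D| * exp (a * x)) atTop atTop :=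
    (tendsto_exp_atTop.comp (tendsto_id.const_mul_atTop ha)).const_mul_atTop (abs_pos.mpr hD)
  obtain ⟨x, hx, hbig⟩ :=
    ((eventually_ge_atTop 0).and (hgrow.eventually_gt_atTop (M + |c|))).exists
  have hdecay : |c * exp (b * x)| ≤ |c| := by
    rw [abs_mul, abs_of_pos (exp_pos _)]
    exact mul_le_of_le_one_right (abs_nonneg c)
      (exp_le_one_iff.mpr (mul_nonpos_of_nonpos_of_nonneg hb hx))
  have htri : |D| * exp (a * x) ≤ |c * exp (b * x) + D * exp (a * x)| + |c * exp (b * x)| := by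
    calc |D| * exp (a * x) = |(c * exp (b * x) + D * exp (a * x)) - c * exp (b * x)| := by
          rw [add_sub_cancel_left, abs_mul, abs_of_pos (exp_pos _)]
      _ ≤ _ := abs_sub _ _
  linarith [hM x hx]

lemma hasDerivWithinAt_derivWithin_of_contDiffOn_two {f : ℝ → ℝ} {s : Set ℝ}
    (hs : UniqueDiffOn ℝ s) (hf : ContDiffOn ℝ 2 f s) (x : ℝ) (hx : x ∈ s) :
    HasDerivWithinAt f (derivWithin f s x) s x ∧
      HasDerivWithinAt (derivWithin f s) (iteratedDerivWithin 2 f s x) s x := by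
  rw [show (2 : WithTop ℕ∞) = 1 + 1 by norm_num, contDiffOn_succ_iff_derivWithin hs] at hf
  rw [iteratedDerivWithin_succ', iteratedDerivWithin_one]
  exact ⟨(hf.1 x hx).hasDerivWithinAt,
    (hf.2.2.differentiableOn one_ne_zero x hx).hasDerivWithinAt⟩

lemma tendsto_mul_one_sub_exp_neg_mul {s : ℝ} (hs : 0 < s) (A : ℝ) :
    Tendsto (fun x => A * (1 - exp (-x * s))) atTop (nhds A) := by
  have hdecay : Tendsto (fun x => exp (-x * s)) atTop (nhds 0) :=
    tendsto_exp_atBot.comp (tendsto_neg_atTop_atBot.atBot_mul_const hs)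
  simpa using (hdecay.const_sub 1).const_mul A

theorem stmt_15 (r xR μ s : ℝ) (hr : 0 < r) (hxR : 0 < xR)
    (hs : s = μ + Real.sqrt (μ^2 + 2*r))
    (T : ℝ → ℝ)
    (hreg : ContDiffOn ℝ 2 T (Set.Ici 0))
    (hbdd : ∃ C, ∀ x ∈ Set.Ici (0:ℝ), |T x| ≤ C)
    (h0 : T 0 = 0)
    (hode : ∀ x ∈ Set.Ici (0:ℝ),
      (1/2) * iteratedDerivWithin 2 T (Set.Ici 0) x
        + μ * derivWithin T (Set.Ici 0) x - r * T x = -1 - r * T xR) :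
    (∀ x ∈ Set.Ici (0:ℝ),
      T x = (1/r) * Real.exp (xR*s) * (1 - Real.exp (-x*s)))
    ∧ Filter.Tendsto T Filter.atTop (nhds ((1/r) * Real.exp (xR*s))) := by
  obtain ⟨A, hrA⟩ : ∃ A, r * A = r * T xR + 1 := ⟨T xR + 1 / r, by field_simp⟩
  set a := -μ + √(μ ^ 2 + 2 * r)
  have hsqrt : √(μ ^ 2 + 2 * r) ^ 2 = μ ^ 2 + 2 * r := sq_sqrt (by positivity)
  have hμ : |μ| < √(μ ^ 2 + 2 * r) :=
    (lt_sqrt (abs_nonneg μ)).mpr (by rw [sq_abs]; linarith)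
  have ha : 0 < a := by linarith [le_abs_self μ]
  have hs_pos : 0 < s := by linarith [neg_abs_le μ]
  have hderiv := hasDerivWithinAt_derivWithin_of_contDiffOn_two (uniqueDiffOn_Ici 0) hreg
  obtain ⟨D, hD⟩ := exists_eq_exp_add_exp_of_hasDerivWithinAt_Ici (u := fun x => T x - A)
    (a := a) (b := -s) (by linarith) (fun x hx => (hderiv x hx).1.sub_const A)
    (fun x hx => (hderiv x hx).2) fun x hx => by
      simp only [a, hs]
      linear_combination 2 * hode x hx - (T x - A) * hsqrt + 2 * hrA
  obtain ⟨C, hC⟩ := hbdd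
  have hD0 : D = 0 := eq_zero_of_bounded_mul_exp_add_mul_exp ha (b := -s) (M := C + |A|)
    (by linarith) fun x hx => by
      rw [← hD x hx]
      exact (abs_sub _ _).trans (by linarith [hC x hx])
  subst hD0
  have hT : ∀ x ∈ Ici (0:ℝ), T x = A * (1 - exp (-x * s)) := fun x hx => by
    rw [show -x * s = -s * x by ring]
    linear_combination hD x hx + exp (-s * x) * h0
  have hA : A = 1 / r * exp (xR * s) := by
    have hexp : exp (-xR * s) * exp (xR * s) = 1 := by rw [← exp_add]; simp
    field_simp
    linear_combination exp (xR * s) * (hrA + r * hT xR hxR.le) - r * A * hexp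
  refine ⟨fun x hx => by rw [hT x hx, hA], ?_⟩
  rw [← hA]
  refine (tendsto_mul_one_sub_exp_neg_mul hs_pos A).congr' ?_
  filter_upwards [eventually_ge_atTop 0] with x hx using (hT x hx).symm
end
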